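/- The number of connected hole-free configurations of n particles on the triangular lattice (up to translation) is at least 22^⌊(n−1)/3⌋. -/

import Mathlib

open Finset

/-- The six neighbor displacement vectors of the triangular lattice Γ, realized on ℤ × ℤ. -/
def triNbrs : List (ℤ × ℤ) := [(1,0), (-1,0), (0,1), (0,-1), (1,1), (-1,-1)]

/-- Translation of a lattice point by a displacement. -/
def shift (v d : ℤ × ℤ) : ℤ × ℤ := (v.1 + d.1, v.2 + d.2)

/-- Adjacency in the triangular lattice Γ. -/
def TriAdj (v w : ℤ × ℤ) : Prop := (w.1 - v.1, w.2 - v.2) ∈ triNbrs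

/-- A particle configuration: a finite set of occupied vertices of Γ. -/
abbrev Config := Finset (ℤ × ℤ)

/-- A configuration is connected if it is nonempty and any two occupied vertices are
joined by a path through occupied vertices. -/
def ConnectedConfig (σ : Config) : Prop :=
  σ.Nonempty ∧ ∀ v ∈ σ, ∀ w ∈ σ,
    Relation.ReflTransGen (fun a b => TriAdj a b ∧ a ∈ σ ∧ b ∈ σ) v w

/-- The connected component of a vertex within the set of unoccupied vertices. -/
def compComponent (σ : Config) (v : ℤ × ℤ) : Set (ℤ × ℤ) :=
  {w | Relation.ReflTransGen (fun a b => TriAdj a b ∧ a ∉ σ ∧ b ∉ σ) v w}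

/-- A hole is a finite maximal component of unoccupied vertices; σ is hole-free
exactly when every unoccupied vertex lies in an infinite component of unoccupied vertices. -/
def HoleFree (σ : Config) : Prop := ∀ v, v ∉ σ → (compComponent σ v).Infinite

/-- Number of triangles of σ: lattice faces with all three vertices occupied.
The faces of Γ are the upward faces {v, v+(1,0), v+(1,1)} and the downward faces
{v, v+(0,1), v+(1,1)}. -/
def triangles (σ : Config) : ℕ :=
  (σ.filter (fun v => shift v (1,0) ∈ σ ∧ shift v (1,1) ∈ σ)).card +
  (σ.filter (fun v => shift v (0,1) ∈ σ ∧ shift v (1,1) ∈ σ)).card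

/-- Number of edges of σ: lattice edges with both endpoints occupied. -/
def edges (σ : Config) : ℕ :=
  (σ.filter (fun v => shift v (1,0) ∈ σ)).card +
  (σ.filter (fun v => shift v (0,1) ∈ σ)).card +
  (σ.filter (fun v => shift v (1,1) ∈ σ)).card

/-- Perimeter of σ: the length of the boundary walk around σ.  For a connected
hole-free configuration, the boundary walk traverses each occupied edge once for
each of its two adjacent lattice faces that is not fully occupied (so an edge
traversed twice is counted twice).  The two faces adjacent to the edge v–v+(1,0)
have third vertices v+(1,1) and v+(0,-1); those adjacent to v–v+(0,1) have third
vertices v+(1,1) and v+(-1,0); those adjacent to v–v+(1,1) have third vertices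
v+(1,0) and v+(0,1). -/
def perim (σ : Config) : ℕ :=
  (∑ v ∈ σ.filter (fun v => shift v (1,0) ∈ σ),
    ((if shift v (1,1) ∈ σ then 0 else 1) + (if shift v (0,-1) ∈ σ then 0 else 1))) +
  (∑ v ∈ σ.filter (fun v => shift v (0,1) ∈ σ),
    ((if shift v (1,1) ∈ σ then 0 else 1) + (if shift v (-1,0) ∈ σ then 0 else 1))) +
  (∑ v ∈ σ.filter (fun v => shift v (1,1) ∈ σ),
    ((if shift v (1,0) ∈ σ then 0 else 1) + (if shift v (0,1) ∈ σ then 0 else 1)))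

/-- Lexicographic order on lattice points, used to normalize configurations up to
translation. -/
def lexLe (a b : ℤ × ℤ) : Prop := a.1 < b.1 ∨ (a.1 = b.1 ∧ a.2 ≤ b.2)

/-- A configuration is normalized if its lexicographically least vertex is the origin;
each translation equivalence class of configurations contains exactly one normalized
representative, so normalized configurations count configurations up to translation. -/
def Normalized (σ : Config) : Prop := ((0,0) : ℤ × ℤ) ∈ σ ∧ ∀ v ∈ σ, lexLe (0,0) v

/-- A function is subexponential if it is eventually dominated by every exponential. -/
def Subexp (f : ℕ → ℝ) : Prop := ∀ c : ℝ, 1 < c → ∀ᶠ k in Filter.atTop, f k ≤ c ^ k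

/-!
A configuration whose columns are vertical segments is hole-free: above or below any empty
vertex lies an empty vertical ray. Such a configuration is determined by its list of columns,
each given by its height and the offset of its bottom from the top of the previous column, and
it is connected as soon as every column touches the top vertex of the previous one. There are
24 such lists of total height 3. They form a prefix code, so appending words of `k` of them to a
seed column of height `(n - 1) % 3 + 1` gives `24 ^ k` distinct normalized, connected,
hole-free configurations of `n = (n - 1) % 3 + 1 + 3 k` particles.
-/

open Relation

lemma triAdj_iff {v w : ℤ × ℤ} :
    TriAdj v w ↔ (w.1 - v.1 = 1 ∧ w.2 - v.2 = 0) ∨ (w.1 - v.1 = -1 ∧ w.2 - v.2 = 0) ∨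
      (w.1 - v.1 = 0 ∧ w.2 - v.2 = 1) ∨ (w.1 - v.1 = 0 ∧ w.2 - v.2 = -1) ∨
      (w.1 - v.1 = 1 ∧ w.2 - v.2 = 1) ∨ (w.1 - v.1 = -1 ∧ w.2 - v.2 = -1) := by
  simp [TriAdj, triNbrs]

lemma TriAdj.symm {v w : ℤ × ℤ} (h : TriAdj v w) : TriAdj w v := by
  rw [triAdj_iff] at *
  omega

lemma TriAdj.abs_fst_sub_le {v w : ℤ × ℤ} (h : TriAdj v w) : |w.1 - v.1| ≤ 1 := by
  rw [triAdj_iff] at h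
  rw [abs_le]
  omega

lemma TriAdj.abs_snd_sub_le {v w : ℤ × ℤ} (h : TriAdj v w) : |w.2 - v.2| ≤ 1 := by
  rw [triAdj_iff] at h
  rw [abs_le]
  omega

def Linked (σ : Config) : ℤ × ℤ → ℤ × ℤ → Prop :=
  ReflTransGen fun a b => TriAdj a b ∧ a ∈ σ ∧ b ∈ σ

namespace Linked

variable {σ : Config} {u v w : ℤ × ℤ}

lemma refl (v : ℤ × ℤ) : Linked σ v v := ReflTransGen.refl

lemma single (h : TriAdj v w) (hv : v ∈ σ) (hw : w ∈ σ) : Linked σ v w :=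
  ReflTransGen.single ⟨h, hv, hw⟩

lemma trans (h₁ : Linked σ u v) (h₂ : Linked σ v w) : Linked σ u w :=
  ReflTransGen.trans h₁ h₂

lemma symm (h : Linked σ v w) : Linked σ w v := by
  induction h with
  | refl => exact .refl _
  | tail _ hstep ih => exact ReflTransGen.head ⟨hstep.1.symm, hstep.2.2, hstep.2.1⟩ ih

lemma uIcc_subset_image (hv : v ∈ σ) (h : Linked σ v w) (f : ℤ × ℤ → ℤ)
    (hf : ∀ a b, TriAdj a b → |f b - f a| ≤ 1) : uIcc (f v) (f w) ⊆ σ.image f := by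
  induction h with
  | refl => simpa using mem_image_of_mem f hv
  | @tail b c _ hstep ih =>
    intro m hm
    have hbc := abs_le.mp (hf b c hstep.1)
    rw [mem_uIcc] at hm
    by_cases hmc : m = f c
    · exact mem_image.mpr ⟨c, hstep.2.2, hmc.symm⟩
    · exact ih (mem_uIcc.mpr (by omega))

end Linked

lemma connectedConfig_of_linked {σ : Config} {u : ℤ × ℤ} (hu : u ∈ σ)
    (h : ∀ v ∈ σ, Linked σ v u) : ConnectedConfig σ :=
  ⟨⟨u, hu⟩, fun v hv w hw => (h v hv).trans (h w hw).symm⟩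

lemma ConnectedConfig.natAbs_sub_lt_card {σ : Config} (hσ : ConnectedConfig σ) {u v : ℤ × ℤ}
    (hu : u ∈ σ) (hv : v ∈ σ) (f : ℤ × ℤ → ℤ) (hf : ∀ a b, TriAdj a b → |f b - f a| ≤ 1) :
    (f v - f u).natAbs < σ.card := by
  have hpath := card_le_card (Linked.uIcc_subset_image hu (hσ.2 u hu v hv) f hf)
  rw [Int.card_uIcc] at hpath
  have := card_image_le (s := σ) (f := f)
  omega

lemma finite_setOf_connected_normalized (n : ℕ) :
    {σ : Config | σ.card = n ∧ ConnectedConfig σ ∧ Normalized σ}.Finite := by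
  refine ((Icc (-n : ℤ) n ×ˢ Icc (-n : ℤ) n).powerset.finite_toSet).subset ?_
  rintro σ ⟨rfl, hσ, h0, -⟩
  rw [coe_powerset, Set.mem_preimage, Set.mem_powerset_iff, coe_subset]
  intro v hv
  have h1 := hσ.natAbs_sub_lt_card h0 hv Prod.fst fun a b h => h.abs_fst_sub_le
  have h2 := hσ.natAbs_sub_lt_card h0 hv Prod.snd fun a b h => h.abs_snd_sub_le
  simp only [sub_zero, mem_product, mem_Icc] at h1 h2 ⊢
  omega

lemma compComponent_infinite_of_ray {σ : Config} {v d : ℤ × ℤ} (hd : d ∈ triNbrs)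
    (hray : ∀ i : ℕ, v + (i : ℤ) • d ∉ σ) : (compComponent σ v).Infinite := by
  have hd0 : d ≠ 0 := by rintro rfl; simp [triNbrs, Prod.ext_iff] at hd
  refine Set.infinite_of_injective_forall_mem (f := fun i : ℕ => v + (i : ℤ) • d)
    (fun i j hij => by simpa using smul_left_injective ℤ hd0 (add_left_cancel hij))
    fun i => ?_
  induction i with
  | zero => simpa [compComponent] using ReflTransGen.refl
  | succ i ih =>
    refine ih.tail ⟨?_, hray i, hray (i + 1)⟩
    change (_ - _ : ℤ × ℤ) ∈ triNbrs
    convert hd using 1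
    rw [Nat.cast_succ, add_smul, one_smul]
    abel

lemma holeFree_of_convex_columns {σ : Config}
    (hσ : ∀ x y₁ y₂ y : ℤ, (x, y₁) ∈ σ → (x, y₂) ∈ σ → y₁ ≤ y → y ≤ y₂ → (x, y) ∈ σ) :
    HoleFree σ := by
  rintro ⟨x, y⟩ hv
  by_cases habove : ∃ i : ℕ, (x, y + i) ∈ σ
  · obtain ⟨j, hj⟩ := habove
    refine compComponent_infinite_of_ray (d := (0, -1)) (by simp [triNbrs]) fun i hi => ?_
    simp only [Prod.smul_mk, smul_zero, smul_neg, zsmul_eq_mul, mul_one, Prod.mk_add_mk,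
      add_zero, Int.cast_id, ← sub_eq_add_neg] at hi
    exact hv (hσ x _ _ y hi hj (by omega) (by omega))
  · push Not at habove
    refine compComponent_infinite_of_ray (d := (0, 1)) (by simp [triNbrs]) fun i => ?_
    simpa using habove i

noncomputable def column (x a : ℤ) (ℓ : ℕ) : Config := {x} ×ˢ Ico a (a + ℓ)

section Column

variable {σ : Config} {x a : ℤ} {ℓ : ℕ} {v : ℤ × ℤ}

@[simp]
lemma mem_column : v ∈ column x a ℓ ↔ v.1 = x ∧ a ≤ v.2 ∧ v.2 < a + ℓ := by
  simp only [column, mem_product, mem_singleton, mem_Ico]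

lemma card_column : (column x a ℓ).card = ℓ := by
  simp [column]

lemma column_inj {a' : ℤ} {ℓ' : ℕ} (hℓ : 0 < ℓ) (hℓ' : 0 < ℓ')
    (h : column x a ℓ = column x a' ℓ') : a = a' ∧ ℓ = ℓ' := by
  have ha : (x, a) ∈ column x a' ℓ' := h ▸ mem_column.mpr ⟨rfl, le_rfl, by omega⟩
  have ha' : (x, a') ∈ column x a ℓ := h ▸ mem_column.mpr ⟨rfl, le_rfl, by omega⟩
  rw [mem_column] at ha ha'
  exact ⟨by omega, by simpa [card_column] using congrArg Finset.card h⟩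

lemma linked_bottom_of_mem_column (hsub : column x a ℓ ⊆ σ) (hv : v ∈ column x a ℓ) :
    Linked σ v (x, a) := by
  obtain ⟨vx, vy⟩ := v
  obtain ⟨rfl, hlo, hhi⟩ := mem_column.mp hv
  obtain ⟨k, rfl⟩ : ∃ k : ℕ, vy = a + k := ⟨(vy - a).toNat, by omega⟩
  suffices ∀ j : ℕ, (j : ℤ) < ℓ → Linked σ (vx, a + j) (vx, a) from this k (by omega)
  intro j
  induction j with
  | zero => simpa using fun _ => Linked.refl _
  | succ j ih =>
    intro hj
    push_cast at hj
    refine .trans (.single ?_ (hsub ?_) (hsub ?_)) (ih (by omega))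
    · rw [triAdj_iff]; push_cast; omega
    all_goals simp only [mem_column, true_and]; push_cast; omega

lemma linked_of_mem_column (hsub : column x a ℓ ⊆ σ) {w : ℤ × ℤ} (hv : v ∈ column x a ℓ)
    (hw : w ∈ column x a ℓ) : Linked σ v w :=
  (linked_bottom_of_mem_column hsub hv).trans (linked_bottom_of_mem_column hsub hw).symm

end Column

/-- Columns placed at `x, x + 1, …`; the column `(δ, ℓ)` has height `ℓ` and its bottom lies `δ`
above the top `t` of the previous column. -/
noncomputable def stackColumns : ℤ → ℤ → List (ℤ × ℕ) → Config
  | _, _, [] => ∅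
  | x, t, (δ, ℓ) :: L => column x (t + δ) ℓ ∪ stackColumns (x + 1) (t + δ + ℓ - 1) L

/-- The column `(δ, ℓ)` is nonempty and meets height `t` or `t + 1`, so that it touches the top
vertex `(x - 1, t)` of the previous column. -/
def Admissible (c : ℤ × ℕ) : Prop := 0 < c.2 ∧ c.1 ≤ 1 ∧ 1 ≤ c.1 + c.2

section StackColumns

variable {σ : Config} {x t δ : ℤ} {ℓ : ℕ} {L : List (ℤ × ℕ)} {v : ℤ × ℤ}

lemma le_fst_of_mem_stackColumns (hv : v ∈ stackColumns x t L) : x ≤ v.1 := by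
  induction L generalizing x t with
  | nil => simp [stackColumns] at hv
  | cons c L ih =>
    rw [stackColumns, mem_union] at hv
    rcases hv with hv | hv
    · exact (mem_column.mp hv).1.ge
    · linarith [ih hv]

lemma card_stackColumns : (stackColumns x t L).card = (L.map Prod.snd).sum := by
  induction L generalizing x t with
  | nil => simp [stackColumns]
  | cons c L ih =>
    rw [stackColumns, card_union_of_disjoint, card_column, ih, List.map_cons, List.sum_cons]
    exact disjoint_left.mpr fun v hv hv' => by
      linarith [(mem_column.mp hv).1, le_fst_of_mem_stackColumns hv']

lemma filter_stackColumns_cons_fst_eq :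
    (stackColumns x t ((δ, ℓ) :: L)).filter (·.1 = x) = column x (t + δ) ℓ := by
  ext v
  simp only [stackColumns, mem_filter, mem_union]
  constructor
  · rintro ⟨hv | hv, hx⟩
    · exact hv
    · linarith [le_fst_of_mem_stackColumns hv]
  · exact fun hv => ⟨.inl hv, (mem_column.mp hv).1⟩

lemma filter_stackColumns_cons_fst_ne :
    (stackColumns x t ((δ, ℓ) :: L)).filter (·.1 ≠ x) =
      stackColumns (x + 1) (t + δ + ℓ - 1) L := by
  ext v
  simp only [stackColumns, mem_filter, mem_union]
  constructor
  · rintro ⟨hv | hv, hx⟩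
    · exact absurd (mem_column.mp hv).1 hx
    · exact hv
  · exact fun hv => ⟨.inr hv, by linarith [le_fst_of_mem_stackColumns hv]⟩

lemma mem_stackColumns_cons (hℓ : 0 < ℓ) : (x, t + δ) ∈ stackColumns x t ((δ, ℓ) :: L) :=
  mem_union_left _ (mem_column.mpr ⟨rfl, le_rfl, by omega⟩)

lemma stackColumns_injective {L' : List (ℤ × ℕ)} (hL : ∀ c ∈ L, 0 < c.2)
    (hL' : ∀ c ∈ L', 0 < c.2) (h : stackColumns x t L = stackColumns x t L') : L = L' := by
  induction L generalizing x t L' with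
  | nil =>
    obtain _ | ⟨⟨δ', ℓ'⟩, L'⟩ := L'
    · rfl
    · have := mem_stackColumns_cons (x := x) (t := t) (δ := δ') (L := L')
        (List.forall_mem_cons.mp hL').1
      rw [← h] at this
      simp [stackColumns] at this
  | cons c L ih =>
    obtain ⟨δ, ℓ⟩ := c
    obtain ⟨hℓ, hrest⟩ := List.forall_mem_cons.mp hL
    obtain _ | ⟨⟨δ', ℓ'⟩, L'⟩ := L'
    · have := mem_stackColumns_cons (x := x) (t := t) (δ := δ) (L := L) hℓ
      rw [h] at this
      simp [stackColumns] at this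
    obtain ⟨hℓ', hrest'⟩ := List.forall_mem_cons.mp hL'
    have hcol := column_inj hℓ hℓ' <| by
      simpa only [filter_stackColumns_cons_fst_eq] using congrArg (filter (·.1 = x)) h
    obtain ⟨rfl, rfl⟩ : δ = δ' ∧ ℓ = ℓ' := ⟨by linarith [hcol.1], hcol.2⟩
    congr 1
    exact ih hrest hrest' <| by
      simpa only [filter_stackColumns_cons_fst_ne] using congrArg (filter (·.1 ≠ x)) h

lemma mem_stackColumns_of_le_of_le {x' y₁ y₂ y : ℤ} (h₁ : (x', y₁) ∈ stackColumns x t L)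
    (h₂ : (x', y₂) ∈ stackColumns x t L) (hy₁ : y₁ ≤ y) (hy₂ : y ≤ y₂) :
    (x', y) ∈ stackColumns x t L := by
  induction L generalizing x t with
  | nil => simp [stackColumns] at h₁
  | cons c L ih =>
    rw [stackColumns, mem_union] at h₁ h₂ ⊢
    rcases h₁ with h₁ | h₁ <;> rcases h₂ with h₂ | h₂
    · rw [mem_column] at h₁ h₂
      exact .inl (mem_column.mpr ⟨h₁.1, by omega, by omega⟩)
    · linarith [(mem_column.mp h₁).1, le_fst_of_mem_stackColumns h₂]
    · linarith [(mem_column.mp h₂).1, le_fst_of_mem_stackColumns h₁]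
    · exact .inr (ih h₁ h₂)

lemma linked_of_mem_stackColumns (hL : ∀ c ∈ L, Admissible c)
    (hsub : stackColumns (x + 1) t L ⊆ σ) (htop : (x, t) ∈ σ)
    (hv : v ∈ stackColumns (x + 1) t L) : Linked σ v (x, t) := by
  induction L generalizing x t with
  | nil => simp [stackColumns] at hv
  | cons c L ih =>
    obtain ⟨δ, ℓ⟩ := c
    obtain ⟨⟨hℓ, hδ, hδℓ⟩, hL⟩ := List.forall_mem_cons.mp hL
    rw [stackColumns, union_subset_iff] at hsub
    -- the vertex of the new column nearest to the top `(x, t)` of the previous one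
    have hanchor : (x + 1, max (t + δ) t) ∈ column (x + 1) (t + δ) ℓ := by
      simp only [mem_column, true_and]; omega
    have hcol : ∀ w ∈ column (x + 1) (t + δ) ℓ, Linked σ w (x, t) := fun w hw =>
      (linked_of_mem_column hsub.1 hw hanchor).trans
        (.single (by rw [triAdj_iff]; omega) (hsub.1 hanchor) htop)
    rw [stackColumns, mem_union] at hv
    rcases hv with hv | hv
    · exact hcol v hv
    · have hnewtop : (x + 1, t + δ + ℓ - 1) ∈ column (x + 1) (t + δ) ℓ := by
        simp only [mem_column, true_and]; omega
      exact (ih hL hsub.2 (hsub.1 hnewtop) hv).trans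
        (hcol _ hnewtop)

end StackColumns

lemma List.flatMap_injective {α β : Type*} {f : α → List β} (hne : ∀ a, f a ≠ [])
    (hprefix : ∀ a b, f a <+: f b → a = b) : Function.Injective (List.flatMap f) := by
  intro w₁
  induction w₁ with
  | nil =>
    rintro (_ | ⟨b, w₂⟩) h
    · rfl
    · exact absurd (List.append_eq_nil_iff.mp h.symm).1 (hne b)
  | cons a w₁ ih =>
    rintro (_ | ⟨b, w₂⟩) h
    · exact absurd (List.append_eq_nil_iff.mp h).1 (hne a)
    simp only [List.flatMap_cons] at h
    have hab : a = b := by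
      rcases List.prefix_or_prefix_of_prefix (h ▸ List.prefix_append _ _)
        (List.prefix_append _ _) with hp | hp
      · exact hprefix a b hp
      · exact (hprefix b a hp).symm
    subst hab
    rw [ih (List.append_cancel_left h)]

/-- All admissible column words of total height 3. -/
def blocks : Fin 24 → List (ℤ × ℕ) :=
  ![[(-2, 3)], [(-1, 3)], [(0, 3)], [(1, 3)],
    [(-1, 2), (0, 1)], [(-1, 2), (1, 1)], [(0, 2), (0, 1)], [(0, 2), (1, 1)],
    [(1, 2), (0, 1)], [(1, 2), (1, 1)],
    [(0, 1), (-1, 2)], [(0, 1), (0, 2)], [(0, 1), (1, 2)],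
    [(1, 1), (-1, 2)], [(1, 1), (0, 2)], [(1, 1), (1, 2)],
    [(0, 1), (0, 1), (0, 1)], [(0, 1), (0, 1), (1, 1)], [(0, 1), (1, 1), (0, 1)],
    [(0, 1), (1, 1), (1, 1)], [(1, 1), (0, 1), (0, 1)], [(1, 1), (0, 1), (1, 1)],
    [(1, 1), (1, 1), (0, 1)], [(1, 1), (1, 1), (1, 1)]]

lemma admissible_of_mem_blocks : ∀ a, ∀ c ∈ blocks a, Admissible c := by
  unfold Admissible
  decide

lemma sum_blocks : ∀ a, ((blocks a).map Prod.snd).sum = 3 := by decide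

lemma blocks_ne_nil : ∀ a, blocks a ≠ [] := by decide

lemma blocks_prefix_free : ∀ a b, blocks a <+: blocks b → a = b := by decide

def wordColumns (r : ℕ) (w : List (Fin 24)) : List (ℤ × ℕ) :=
  (0, r + 1) :: w.flatMap blocks

noncomputable def wordConfig (r : ℕ) (w : List (Fin 24)) : Config :=
  stackColumns 0 0 (wordColumns r w)

section WordConfig

variable (r : ℕ) (w : List (Fin 24))

lemma admissible_of_mem_wordColumns : ∀ c ∈ wordColumns r w, Admissible c := by
  refine List.forall_mem_cons.mpr ⟨⟨by omega, by omega, by omega⟩, fun c hc => ?_⟩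
  obtain ⟨a, -, hc⟩ := List.mem_flatMap.mp hc
  exact admissible_of_mem_blocks a c hc

lemma card_wordConfig : (wordConfig r w).card = r + 1 + 3 * w.length := by
  rw [wordConfig, wordColumns, card_stackColumns, List.map_cons, List.sum_cons, List.map_flatMap]
  simp [List.flatMap_def, List.sum_flatten, Function.comp_def, sum_blocks, mul_comm]

lemma wordConfig_injective : Function.Injective (wordConfig r) := fun w₁ w₂ h =>
  List.flatMap_injective blocks_ne_nil blocks_prefix_free <| List.cons_injective <|
    stackColumns_injective (fun c hc => (admissible_of_mem_wordColumns r w₁ c hc).1)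
      (fun c hc => (admissible_of_mem_wordColumns r w₂ c hc).1) h

lemma normalized_wordConfig : Normalized (wordConfig r w) := by
  have horigin := mem_stackColumns_cons (x := 0) (t := 0) (δ := 0) (L := w.flatMap blocks)
    (Nat.succ_pos r)
  refine ⟨horigin, fun v hv => ?_⟩
  rw [wordConfig, wordColumns, stackColumns, mem_union, mem_column] at hv
  rcases hv with hv | hv
  · exact .inr ⟨hv.1.symm, by omega⟩
  · exact .inl (by linarith [le_fst_of_mem_stackColumns hv])

lemma connectedConfig_wordConfig : ConnectedConfig (wordConfig r w) := by
  have hseed : column 0 (0 + 0) (r + 1) ⊆ wordConfig r w := subset_union_left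
  have horigin : ((0, 0) : ℤ × ℤ) ∈ column 0 (0 + 0) (r + 1) := by simp
  have htop : ((0, 0 + 0 + ((r + 1 : ℕ) : ℤ) - 1) : ℤ × ℤ) ∈ column 0 (0 + 0) (r + 1) := by
    simp only [mem_column, true_and]; omega
  refine connectedConfig_of_linked (hseed horigin) fun v hv => ?_
  rw [wordConfig, wordColumns, stackColumns, mem_union] at hv
  rcases hv with hv | hv
  · exact linked_of_mem_column hseed hv horigin
  · exact (linked_of_mem_stackColumns
      (List.forall_mem_cons.mp (admissible_of_mem_wordColumns r w)).2 subset_union_right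
      (hseed htop) hv).trans (linked_of_mem_column hseed htop horigin)

lemma holeFree_wordConfig : HoleFree (wordConfig r w) :=
  holeFree_of_convex_columns fun _ _ _ _ => mem_stackColumns_of_le_of_le

end WordConfig

/-- the number of connected hole-free configurations of n particles,
counted up to translation (i.e., normalized), is at least 22^⌊(n−1)/3⌋. -/
theorem count_configs_lower_bound (n : ℕ) (hn : 1 ≤ n) :
    22 ^ ((n - 1) / 3) ≤
      {σ : Config | σ.card = n ∧ ConnectedConfig σ ∧ HoleFree σ ∧ Normalized σ}.ncard := by
  set S := {σ : Config | σ.card = n ∧ ConnectedConfig σ ∧ HoleFree σ ∧ Normalized σ}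
  set k := (n - 1) / 3
  obtain ⟨r, hr⟩ : ∃ r, n = r + 1 + 3 * k := ⟨(n - 1) % 3, by omega⟩
  have hfin : S.Finite := (finite_setOf_connected_normalized n).subset
    fun σ hσ => ⟨hσ.1, hσ.2.1, hσ.2.2.2⟩
  have hmem (f : Fin k → Fin 24) : wordConfig r (List.ofFn f) ∈ S :=
    ⟨by rw [card_wordConfig, List.length_ofFn, hr], connectedConfig_wordConfig r _,
      holeFree_wordConfig r _, normalized_wordConfig r _⟩
  have : Finite S := hfin.to_subtype
  calc 22 ^ k ≤ 24 ^ k := Nat.pow_le_pow_left (by norm_num) k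
    _ = Nat.card (Fin k → Fin 24) := by simp
    _ ≤ Nat.card S := Nat.card_le_card_of_injective (fun f => ⟨_, hmem f⟩)
      fun f g h => List.ofFn_injective (wordConfig_injective r (congrArg Subtype.val h))
    _ = S.ncard := Nat.card_coe_set_eq S
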